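/- Let J_1 ⊆ 𝒜_{m_1} and J_2 ⊆ 𝒜_{m_2} be proper ideals, write TB(J_t) = (s_1^{(t)}, s_2^{(t)}, …) for t = 1, 2, and set s_q = s_q^{(1)} + s_q^{(2)} for each q ≥ 1. Then for every p ≥ 1 the iterated critical extensions of the product ideal split as products: Δ^{s_p} Δ^{s_{p−1}} ⋯ Δ^{s_1}(J_1 ⊞ J_2) = (Δ^{s_p^{(1)}} ⋯ Δ^{s_1^{(1)}} J_1) ⊞ (Δ^{s_p^{(2)}} ⋯ Δ^{s_1^{(2)}} J_2) as ideals of 𝒜_{m_1+m_2}. -/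

import Mathlib

open MvPowerSeries

/-- `𝒜 m` : formal power series in `m` variables over `ℂ`, the algebraic model for the
local ring of germs of differentiable functions at the origin of `ℂ^m`. -/
abbrev Amod (m : ℕ) : Type := MvPowerSeries (Fin m) ℂ

/-- Formal partial derivative `∂/∂x_j` of a multivariate power series. -/
noncomputable def pd {m : ℕ} (j : Fin m) (φ : Amod m) : Amod m :=
  fun e => ((e j + 1 : ℕ) : ℂ) * MvPowerSeries.coeff (e + Finsupp.single j 1) φ

/-- The differential at the origin: the vector of degree-one coefficients. -/
noncomputable def diffAtZero {m : ℕ} (φ : Amod m) : Fin m → ℂ :=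
  fun j => MvPowerSeries.coeff (Finsupp.single j 1) φ

/-- The rank of an ideal `B ⊆ 𝒜 m`: the dimension of the `ℂ`-linear span of the
differentials at `0` of the elements of `B`. -/
noncomputable def rankIdeal {m : ℕ} (B : Ideal (Amod m)) : ℕ :=
  Module.finrank ℂ (Submodule.span ℂ (diffAtZero '' (B : Set (Amod m))))

/-- The corank of an ideal `B ⊆ 𝒜 m`. -/
noncomputable def corankIdeal {m : ℕ} (B : Ideal (Amod m)) : ℕ := m - rankIdeal B

/-- The Jacobian extension `Δ_k B` (lower index): the ideal generated by `B` together with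
all `k × k` minors of Jacobian matrices of `k`-tuples of elements of `B`; for `k > m` it
is `B` itself. -/
noncomputable def jacExt {m : ℕ} (k : ℕ) (B : Ideal (Amod m)) : Ideal (Amod m) :=
  if m < k then B
  else B ⊔ Ideal.span { f | ∃ φ : Fin k → Amod m, (∀ i, φ i ∈ B) ∧
    ∃ j : Fin k → Fin m, StrictMono j ∧
      f = Matrix.det (Matrix.of fun i l => pd (j l) (φ i)) }

/-- Jacobian extension with upper index: `Δ^i B = Δ_{m-i+1} B`. -/
noncomputable def jacExtUpper {m : ℕ} (i : ℕ) (B : Ideal (Amod m)) : Ideal (Amod m) :=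
  jacExt (m - i + 1) B

/-- The iterated critical extensions `TBiter J p = Δ^{i_p} ⋯ Δ^{i_1} J`. -/
noncomputable def TBiter {m : ℕ} (J : Ideal (Amod m)) : ℕ → Ideal (Amod m)
  | 0 => J
  | p + 1 => jacExtUpper (corankIdeal (TBiter J p)) (TBiter J p)

/-- The Thom–Boardman symbol, `0`-indexed: `TB J p` is the `(p+1)`-st entry `i_{p+1}`,
i.e. `TB J 0 = corank J` and `TB J p = corank (Δ^{i_p} ⋯ Δ^{i_1} J)`. -/
noncomputable def TB {m : ℕ} (J : Ideal (Amod m)) (p : ℕ) : ℕ :=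
  corankIdeal (TBiter J p)

/-- Coefficient `a_i` of the generic monic polynomial of degree `n`
(the first block of `n` variables of `𝒜 (n+r)`), with `a_n = 1` and `a_i = 0` for `i > n`. -/
noncomputable def aCoef (n r i : ℕ) : Amod (n + r) :=
  if h : i < n then MvPowerSeries.X (Fin.castAdd r ⟨i, h⟩)
  else if i = n then 1 else 0

/-- Coefficient `b_j` of the generic monic polynomial of degree `r`
(the last block of `r` variables of `𝒜 (n+r)`), with `b_r = 1` and `b_j = 0` for `j > r`. -/
noncomputable def bCoef (n r j : ℕ) : Amod (n + r) :=
  if h : j < r then MvPowerSeries.X (Fin.natAdd n ⟨j, h⟩)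
  else if j = r then 1 else 0

/-- Coefficient `c_k` of the product `(x^n + Σ_{i<n} a_i x^i) (x^r + Σ_{j<r} b_j x^j)`. -/
noncomputable def cCoef (n r k : ℕ) : Amod (n + r) :=
  ∑ p ∈ Finset.HasAntidiagonal.antidiagonal k, aCoef n r p.1 * bCoef n r p.2

/-- The ideal `I(μ_{n,r}) ⊆ 𝒜 (n+r)` of the polynomial multiplication map `μ_{n,r}`,
generated by `c_0, …, c_{n+r-1}`. -/
noncomputable def muIdeal (n r : ℕ) : Ideal (Amod (n + r)) :=
  Ideal.span (Set.range fun k : Fin (n + r) => cCoef n r (k : ℕ))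

/-- The sequence `I(n,r)` given by the Euclidean algorithm on `n` and `r` (0-indexed):
`r` repeated `n / r` times, then `r₁ = n % r` repeated `r / r₁` times, …, followed by zeros. -/
def euclidSeq (n r p : ℕ) : ℕ :=
  if h : r = 0 then 0
  else if p < n / r then r
  else euclidSeq r (n % r) (p - n / r)
termination_by r
decreasing_by exact Nat.mod_lt _ (Nat.pos_of_ne_zero h)

/-- The `ℂ`-algebra embedding `𝒜 m₁ → 𝒜 (m₁+m₂)` using the first `m₁` variables. -/
noncomputable def embL {m₁ m₂ : ℕ} (φ : Amod m₁) : Amod (m₁ + m₂) :=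
  fun e =>
    if ∀ j : Fin m₂, e (Fin.natAdd m₁ j) = 0 then
      MvPowerSeries.coeff (Finsupp.equivFunOnFinite.symm fun i => e (Fin.castAdd m₂ i)) φ
    else 0

/-- The `ℂ`-algebra embedding `𝒜 m₂ → 𝒜 (m₁+m₂)` using the last `m₂` variables. -/
noncomputable def embR {m₁ m₂ : ℕ} (φ : Amod m₂) : Amod (m₁ + m₂) :=
  fun e =>
    if ∀ i : Fin m₁, e (Fin.castAdd m₂ i) = 0 then
      MvPowerSeries.coeff (Finsupp.equivFunOnFinite.symm fun j => e (Fin.natAdd m₁ j)) φ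
    else 0

/-- The product ideal `J₁ ⊞ J₂ ⊆ 𝒜 (m₁+m₂)`, generated by the images of `J₁` and `J₂`
under the two embeddings; it models the ideal of the Cartesian product of two map-germs. -/
noncomputable def prodIdeal {m₁ m₂ : ℕ} (J₁ : Ideal (Amod m₁)) (J₂ : Ideal (Amod m₂)) :
    Ideal (Amod (m₁ + m₂)) :=
  Ideal.span (embL '' (J₁ : Set (Amod m₁)) ∪ embR '' (J₂ : Set (Amod m₂)))

/-- Iterated upper Jacobian extensions `Δ^{s p} ⋯ Δ^{s 1} K₀` along a prescribed sequence
`s` of upper indices (0-indexed: the extension at step `q+1` uses index `s q`). -/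
noncomputable def iterExt {m : ℕ} (K₀ : Ideal (Amod m)) (s : ℕ → ℕ) : ℕ → Ideal (Amod m)
  | 0 => K₀
  | p + 1 => jacExtUpper (s p) (iterExt K₀ s p)

/-!
Let `r₁, r₂` be the ranks of `B₁ ⊆ 𝒜_{m₁}` and `B₂ ⊆ 𝒜_{m₂}`. On `𝒜_{m₁+m₂}` the upper index
`corank B₁ + corank B₂` is the lower index `r₁ + r₂ + 1`, so by induction everything reduces to
`Δ_{r₁+r₂+1}(B₁ ⊞ B₂) = Δ_{r₁+1} B₁ ⊞ Δ_{r₂+1} B₂`.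

`⊆`: modulo the right-hand side the rows of a Jacobian are linear in the functions, so one may take
each row from `B₁` or from `B₂`. Such a Jacobian is block diagonal after permuting rows and columns;
its determinant vanishes unless both blocks are square, and then one of them is a minor of size at
least `r₁ + 1` of `B₁` or at least `r₂ + 1` of `B₂`.

`⊇`: since `B₂` has rank `r₂`, it contains `r₂` functions with a minor that is a unit. Bordering an
`(r₁+1)`-minor of `B₁` by this unit minor gives an `(r₁+r₂+1)`-minor of `B₁ ⊞ B₂`, which is the
embedded minor times a unit.
-/

namespace MvPowerSeries

variable {σ τ ρ R : Type*} [CommSemiring R]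

theorem coeff_rename_eq_zero_of_apply_ne_zero (e : σ ↪ τ) (p : MvPowerSeries σ R)
    {x : τ →₀ ℕ} {t : τ} (ht : t ∉ Set.range e) (hx : x t ≠ 0) : coeff x (rename e p) = 0 :=
  coeff_rename_eq_zero _ p fun ⟨y, hy⟩ => hx (hy ▸ Finsupp.mapDomain_of_notMem_range y t ht)

theorem pderiv_rename_of_notMem_range (e : σ ↪ τ) (p : MvPowerSeries σ R) {t : τ}
    (ht : t ∉ Set.range e) : pderiv R t (rename e p) = 0 := by
  ext x
  rw [coeff_pderiv, coeff_rename_eq_zero_of_apply_ne_zero e p ht (by simp), zero_mul, map_zero]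

theorem pderiv_rename (e : σ ↪ τ) (p : MvPowerSeries σ R) (i : σ) :
    pderiv R (e i) (rename e p) = rename e (pderiv R i p) := by
  ext x
  by_cases hx : x ∈ Set.range (Finsupp.embDomain e)
  · obtain ⟨y, rfl⟩ := hx
    rw [coeff_pderiv, ← Finsupp.embDomain_single, ← Finsupp.embDomain_add,
      coeff_embDomain_rename, coeff_embDomain_rename, coeff_pderiv, Finsupp.embDomain_apply_self]
  · obtain ⟨t, hxt, ht⟩ := Set.not_subset.1 (mt (Finsupp.mem_range_embDomain_iff e x).2 hx)
    have hxt : x t ≠ 0 := Finsupp.mem_support_iff.1 hxt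
    rw [coeff_pderiv, coeff_rename_eq_zero_of_apply_ne_zero e _ ht hxt,
      coeff_rename_eq_zero_of_apply_ne_zero e p ht (by simp [hxt]), zero_mul]

theorem coeff_rename_eq_ite [Finite σ] {u : σ ↪ τ} {v : ρ ↪ τ}
    (huv : IsCompl (Set.range u) (Set.range v)) (p : MvPowerSeries σ R) (x : τ →₀ ℕ)
    [Decidable (∀ j, x (v j) = 0)] :
    coeff x (rename u p) = if ∀ j, x (v j) = 0 then
      coeff (Finsupp.equivFunOnFinite.symm fun i => x (u i)) p else 0 := by
  split_ifs with h
  · have hx : x = Finsupp.embDomain u (Finsupp.equivFunOnFinite.symm fun i => x (u i)) := by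
      ext t
      obtain ⟨i, rfl⟩ | ⟨j, rfl⟩ : t ∈ Set.range u ⊔ Set.range v := huv.sup_eq_top ▸ trivial
      · simp
      · rw [Finsupp.embDomain_of_notMem_range _ _ _ (huv.disjoint.notMem_of_mem_right ⟨j, rfl⟩),
          h j]
    rw [hx, coeff_embDomain_rename, ← hx]
  · obtain ⟨j, hj⟩ := not_forall.1 h
    exact coeff_rename_eq_zero_of_apply_ne_zero u p (huv.disjoint.notMem_of_mem_right ⟨j, rfl⟩) hj

end MvPowerSeries

theorem pd_eq_pderiv {m : ℕ} (j : Fin m) : pd j = pderiv ℂ j := by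
  funext φ
  ext e
  rw [coeff_pderiv]
  exact (mul_comm _ _).trans (by push_cast; rfl)

theorem Fin.isCompl_range_castAddEmb_natAddEmb (m₁ m₂ : ℕ) :
    IsCompl (Set.range (Fin.castAddEmb m₂ : Fin m₁ ↪ Fin (m₁ + m₂)))
      (Set.range (Fin.natAddEmb m₁ : Fin m₂ ↪ Fin (m₁ + m₂))) := by
  constructor
  · rw [Set.disjoint_left]
    rintro _ ⟨i, rfl⟩ ⟨j, h⟩
    have := Fin.ext_iff.1 h
    simp only [Fin.natAddEmb_apply, Fin.castAddEmb_apply, Fin.val_natAdd, Fin.val_castAdd] at this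
    omega
  · exact codisjoint_iff.2 <| Set.eq_univ_of_forall <|
      Fin.addCases (fun i => Or.inl ⟨i, rfl⟩) (fun j => Or.inr ⟨j, rfl⟩)

section Embeddings

variable {m₁ m₂ : ℕ}

theorem embL_eq_rename : (embL : Amod m₁ → Amod (m₁ + m₂)) = rename (Fin.castAddEmb m₂) := by
  funext φ
  ext x
  rw [coeff_rename_eq_ite (Fin.isCompl_range_castAddEmb_natAddEmb m₁ m₂)]
  rfl

theorem embR_eq_rename : (embR : Amod m₂ → Amod (m₁ + m₂)) = rename (Fin.natAddEmb m₁) := by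
  funext φ
  ext x
  rw [coeff_rename_eq_ite (Fin.isCompl_range_castAddEmb_natAddEmb m₁ m₂).symm]
  rfl

end Embeddings

namespace Matrix

variable {n R : Type*} [Fintype n] [DecidableEq n] [CommRing R]

theorem det_eq_zero_of_card_ne {M : Matrix n n R} {p q : n → Prop} [DecidablePred p]
    [DecidablePred q] (hM : ∀ i j, M i j ≠ 0 → (p i ↔ q j))
    (hcard : Fintype.card {i // p i} ≠ Fintype.card {j // q j}) : M.det = 0 := by
  rw [det_apply]
  refine Finset.sum_eq_zero fun σ _ => ?_
  by_contra hσ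
  have hne : ∀ j, M (σ j) j ≠ 0 := fun j h =>
    hσ (by rw [Finset.prod_eq_zero (f := fun i => M (σ i) i) (Finset.mem_univ j) h, smul_zero])
  exact hcard (Fintype.card_congr (σ.subtypeEquiv fun j => (hM _ _ (hne j)).symm)).symm

/-- Up to sign, `det M` is the product of the determinants of the two diagonal blocks once these
are made square, and it vanishes if they cannot be. -/
theorem det_mem_of_blockDiagonal_pattern (I : Ideal R) {M : Matrix n n R} {p q : n → Prop}
    [DecidablePred p] [DecidablePred q] (hM : ∀ i j, M i j ≠ 0 → (p i ↔ q j))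
    (hI : ∀ (e₁ : {i // p i} ≃ {j // q j}) (e₂ : {i // ¬p i} ≃ {j // ¬q j}),
      (M.submatrix (↑) fun j => e₁ j).det ∈ I ∨ (M.submatrix (↑) fun j => e₂ j).det ∈ I) :
    M.det ∈ I := by
  by_cases hcard : Fintype.card {i // p i} = Fintype.card {j // q j}
  swap
  · rw [det_eq_zero_of_card_ne hM hcard]
    exact I.zero_mem
  let e₁ := Fintype.equivOfCardEq hcard
  let e₂ : {i // ¬p i} ≃ {j // ¬q j} :=
    Fintype.equivOfCardEq (by simp only [Fintype.card_subtype_compl, hcard])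
  let σ : Equiv.Perm n := (Equiv.sumCompl p).symm.trans ((e₁.sumCongr e₂).trans (Equiv.sumCompl q))
  have hσ₁ (j : {j // p j}) : σ j = e₁ j := by simp [σ, Equiv.sumCompl_symm_apply_of_pos j.2]
  have hσ₂ (j : {j // ¬p j}) : σ j = e₂ j := by simp [σ, Equiv.sumCompl_symm_apply_of_neg j.2]
  have hblocks : (M.submatrix id σ).det =
      (M.submatrix (↑) fun j => e₁ j).det * (M.submatrix (↑) fun j => e₂ j).det := by
    rw [twoBlockTriangular_det _ p fun i hi j hj => ?_]
    · congr 2 <;> ext i j <;> simp [toSquareBlockProp, toBlock, hσ₁, hσ₂]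
    · by_contra hne
      have := hM _ _ hne
      simp only [id_eq, hσ₁ ⟨j, hj⟩] at this
      exact hi (this.2 (e₁ ⟨j, hj⟩).2)
  have hdet : M.det = (Equiv.Perm.sign σ : ℤ) * (M.submatrix id σ).det := by
    rw [det_permute', ← mul_assoc, ← Int.cast_mul, ← Units.val_mul, Int.units_mul_self,
      Units.val_one, Int.cast_one, one_mul]
  rw [hdet, hblocks]
  exact I.mul_mem_left _ ((hI e₁ e₂).elim (I.mul_mem_right _) (I.mul_mem_left _))

end Matrix

theorem le_jacExt {m : ℕ} (k : ℕ) (B : Ideal (Amod m)) : B ≤ jacExt k B := by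
  rw [jacExt]
  split_ifs
  exacts [le_rfl, le_sup_left]

noncomputable def jacobian {m : ℕ} {ι κ : Type*} (φ : ι → Amod m) (c : κ → Fin m) :
    Matrix ι κ (Amod m) :=
  Matrix.of fun i l => pd (c l) (φ i)

section Jacobian

variable {m : ℕ} {ι κ : Type*}

theorem jacobian_update [DecidableEq ι] (φ : ι → Amod m) (c : κ → Fin m) (a : ι) (x : Amod m) :
    jacobian (Function.update φ a x) c = (jacobian φ c).updateRow a fun l => pd (c l) x := by
  ext i l
  by_cases h : i = a
  · subst h; simp [jacobian]
  · simp [jacobian, h]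

theorem jacobian_rename {a : ℕ} (u : Fin a ↪ Fin m) (ψ : ι → Amod a) (c : κ → Fin a) :
    jacobian (rename u ∘ ψ) (u ∘ c) = (jacobian ψ c).map (rename u) := by
  ext i l
  simp [jacobian, pd_eq_pderiv, pderiv_rename]

theorem det_jacobian_mem_jacExt [Fintype ι] [DecidableEq ι] {B : Ideal (Amod m)} {k : ℕ}
    {φ : ι → Amod m} (hφ : ∀ i, φ i ∈ B) {c : ι → Fin m} (hc : c.Injective)
    (hk : k ≤ Fintype.card ι) : (jacobian φ c).det ∈ jacExt k B := by
  suffices h : ∀ t, k ≤ t → ∀ (φ : Fin t → Amod m) (c : Fin t → Fin m), (∀ i, φ i ∈ B) →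
      c.Injective → (jacobian φ c).det ∈ jacExt k B by
    let e := Fintype.equivFin ι
    rw [← Matrix.det_submatrix_equiv_self e.symm]
    exact h _ hk (φ ∘ e.symm) (c ∘ e.symm) (fun i => hφ _) (hc.comp e.symm.injective)
  intro t ht
  induction t, ht using Nat.le_induction with
  | base =>
    intro φ c hφ hc
    have hkm : ¬ m < k := not_lt.2 (by simpa using Fintype.card_le_of_injective c hc)
    let σ := Tuple.sort c
    have hmono : StrictMono (c ∘ σ) :=
      (Tuple.monotone_sort c).strictMono_of_injective (hc.comp σ.injective)
    have hperm : jacobian φ c = (jacobian φ (c ∘ σ)).submatrix id ⇑σ⁻¹ := by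
      ext i l
      simp [jacobian]
    rw [jacExt, if_neg hkm, hperm, Matrix.det_permute']
    exact Ideal.mul_mem_left _ _ (Ideal.mem_sup_right (Ideal.subset_span ⟨φ, hφ, _, hmono, rfl⟩))
  | succ t _ ih =>
    intro φ c hφ hc
    rw [Matrix.det_succ_row_zero]
    refine Ideal.sum_mem _ fun l _ => Ideal.mul_mem_left _ _ ?_
    exact ih (φ ∘ Fin.succ) (c ∘ l.succAbove) (fun i => hφ _)
      (hc.comp Fin.succAbove_right_injective)

/-- Modulo an ideal containing `G`, the Jacobian rows of elements of `Ideal.span G` are linear in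
the functions, since `∂(r g) = r ∂g + g ∂r ≡ r ∂g`; so minors may be checked on generators. -/
theorem det_jacobian_mem_of_mem_span [Fintype ι] [DecidableEq ι] {G : Set (Amod m)}
    {I : Ideal (Amod m)} (hGI : G ⊆ I) (c : ι → Fin m)
    (hG : ∀ φ : ι → Amod m, (∀ i, φ i ∈ G) → (jacobian φ c).det ∈ I)
    {φ : ι → Amod m} (hφ : ∀ i, φ i ∈ Ideal.span G) : (jacobian φ c).det ∈ I := by
  suffices h : ∀ s : Finset ι, ∀ φ : ι → Amod m, (∀ i, φ i ∈ Ideal.span G) →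
      (∀ i ∉ s, φ i ∈ G) → (jacobian φ c).det ∈ I from
    h Finset.univ φ hφ (by simp)
  intro s
  induction s using Finset.induction_on with
  | empty => exact fun φ _ hφG => hG φ fun i => hφG i (Finset.notMem_empty i)
  | insert a s ha ih =>
    intro φ hφ hφG
    suffices h : ∀ x ∈ Ideal.span G, (jacobian (Function.update φ a x) c).det ∈ I by
      simpa using h (φ a) (hφ a)
    intro x hx
    induction hx using Submodule.span_induction with
    | mem x hx =>
      refine ih _ (Function.forall_update_iff _ (p := fun _ y => y ∈ Ideal.span G) |>.2
        ⟨Ideal.subset_span hx, fun i _ => hφ i⟩) fun i hi => ?_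
      rw [Function.update_apply]
      split_ifs with h
      · exact hx
      · exact hφG i (by simp [h, hi])
    | zero =>
      rw [jacobian_update, Matrix.det_eq_zero_of_row_eq_zero a fun l => by simp [pd_eq_pderiv]]
      exact I.zero_mem
    | add x y _ _ hx hy =>
      rw [jacobian_update] at hx hy ⊢
      simp only [pd_eq_pderiv, map_add] at hx hy ⊢
      rw [← Pi.add_def, Matrix.det_updateRow_add]
      exact I.add_mem hx hy
    | smul r x hx' hx =>
      rw [jacobian_update] at hx ⊢
      simp only [pd_eq_pderiv, smul_eq_mul, Derivation.leibniz] at hx ⊢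
      have hrow : (fun l => r * pderiv ℂ (c l) x + x * pderiv ℂ (c l) r) =
          r • (fun l => pderiv ℂ (c l) x) + x • fun l => pderiv ℂ (c l) r := rfl
      rw [hrow, Matrix.det_updateRow_add, Matrix.det_updateRow_smul, Matrix.det_updateRow_smul]
      exact I.add_mem (I.mul_mem_left r hx) (I.mul_mem_right _ (Ideal.span_le.2 hGI hx'))

end Jacobian

theorem LinearIndependent.exists_det_ne_zero {K n : Type*} [Field K] [Fintype n] {r : ℕ}
    {v : Fin r → n → K} (hv : LinearIndependent K v) :
    ∃ c : Fin r → n, c.Injective ∧ (Matrix.of fun i l => v i (c l)).det ≠ 0 := by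
  let A : Matrix (Fin r) n K := Matrix.of v
  have hrank : Module.finrank K (Submodule.span K (Set.range A.col)) = r := by
    rw [← Matrix.rank_eq_finrank_span_cols, Matrix.rank_eq_finrank_span_row]
    exact (finrank_span_eq_card hv).trans (Fintype.card_fin r)
  obtain ⟨κ, a, ha, hspan, hind⟩ := exists_linearIndependent' K A.col
  have : Fintype κ := @Fintype.ofFinite _ hind.finite
  have hcard : Fintype.card κ = r := by rw [← finrank_span_eq_card hind, hspan, hrank]
  let e := (Fintype.equivFinOfCardEq hcard).symm
  refine ⟨a ∘ e, ha.comp e.injective, ?_⟩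
  rw [← isUnit_iff_ne_zero, ← Matrix.isUnit_iff_isUnit_det,
    ← Matrix.linearIndependent_cols_iff_isUnit]
  exact hind.comp e e.injective

section Rank

variable {m : ℕ}

theorem rankIdeal_le (B : Ideal (Amod m)) : rankIdeal B ≤ m :=
  (Submodule.finrank_le _).trans_eq (Module.finrank_fin_fun ℂ)

theorem exists_linearIndependent_diffAtZero (B : Ideal (Amod m)) :
    ∃ ψ : Fin (rankIdeal B) → Amod m, (∀ i, ψ i ∈ B) ∧
      LinearIndependent ℂ fun i => diffAtZero (ψ i) := by
  obtain ⟨κ, a, -, hspan, hind⟩ :=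
    exists_linearIndependent' ℂ fun x : B => diffAtZero (x : Amod m)
  have : Fintype κ := @Fintype.ofFinite _ hind.finite
  have hcard : Fintype.card κ = rankIdeal B := by
    rw [← finrank_span_eq_card hind, hspan, rankIdeal, Set.image_eq_range]
    rfl
  let e := (Fintype.equivFinOfCardEq hcard).symm
  exact ⟨fun i => a (e i), fun i => (a (e i)).2, hind.comp e e.injective⟩

theorem constantCoeff_pd (j : Fin m) (φ : Amod m) :
    constantCoeff (pd j φ) = diffAtZero φ j := by
  simp [pd_eq_pderiv, ← coeff_zero_eq_constantCoeff_apply, coeff_pderiv, diffAtZero]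

theorem exists_isUnit_det_jacobian (B : Ideal (Amod m)) :
    ∃ ψ : Fin (rankIdeal B) → Amod m, (∀ i, ψ i ∈ B) ∧
      ∃ c : Fin (rankIdeal B) → Fin m, c.Injective ∧ IsUnit (jacobian ψ c).det := by
  obtain ⟨ψ, hψB, hψ⟩ := exists_linearIndependent_diffAtZero B
  obtain ⟨c, hc, hdet⟩ := hψ.exists_det_ne_zero
  refine ⟨ψ, hψB, c, hc, ?_⟩
  have hconst : constantCoeff.mapMatrix (jacobian ψ c) =
      Matrix.of fun i l => diffAtZero (ψ i) (c l) := by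
    ext i l
    exact constantCoeff_pd _ _
  rw [isUnit_iff_constantCoeff, RingHom.map_det, hconst]
  exact hdet.isUnit

end Rank

section SplitVariables

variable {a b m : ℕ} {u : Fin a ↪ Fin m} {v : Fin b ↪ Fin m} {ι : Type*} [Fintype ι]
  [DecidableEq ι]

theorem det_jacobian_mem_map_rename {B : Ideal (Amod a)} {k : ℕ} {φ : ι → Amod m}
    (hφ : ∀ i, φ i ∈ rename u '' (B : Set (Amod a))) {c : ι → Fin m} (hc : c.Injective)
    (hcu : ∀ j, c j ∈ Set.range u) (hk : k ≤ Fintype.card ι) :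
    (jacobian φ c).det ∈ (jacExt k B).map (rename u) := by
  choose ψ hψB hψ using hφ
  choose c' hc' using hcu
  have hφc : jacobian φ c = jacobian (rename u ∘ ψ) (u ∘ c') := by
    ext i l
    simp [jacobian, hψ, hc']
  rw [hφc, jacobian_rename, ← AlgHom.mapMatrix_apply, ← AlgHom.map_det]
  refine Ideal.mem_map_of_mem _ (det_jacobian_mem_jacExt hψB (fun i j h => hc ?_) hk)
  rw [← hc', ← hc', h]

theorem det_jacobian_mem_map_sup_map (huv : IsCompl (Set.range u) (Set.range v))
    {B : Ideal (Amod a)} {C : Ideal (Amod b)} {k₁ k₂ : ℕ} {φ : ι → Amod m}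
    (hφ : ∀ i, φ i ∈ rename u '' (B : Set (Amod a)) ∪ rename v '' (C : Set (Amod b)))
    {c : ι → Fin m} (hc : c.Injective) (hcard : k₁ + k₂ + 1 ≤ Fintype.card ι) :
    (jacobian φ c).det ∈
      (jacExt (k₁ + 1) B).map (rename u) ⊔ (jacExt (k₂ + 1) C).map (rename v) := by
  classical
  set L := rename u '' (B : Set (Amod a))
  refine Matrix.det_mem_of_blockDiagonal_pattern _ (p := fun i => φ i ∈ L)
    (q := fun j => c j ∈ Set.range u) (fun i j hij => ⟨?_, fun hj => ?_⟩) fun e₁ e₂ => ?_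
  · rintro ⟨x, -, hx⟩
    by_contra hj
    exact hij (by simp [jacobian, ← hx, pd_eq_pderiv, pderiv_rename_of_notMem_range u x hj])
  · refine (hφ i).resolve_right fun ⟨y, _, hy⟩ => hij ?_
    simp [jacobian, ← hy, pd_eq_pderiv,
      pderiv_rename_of_notMem_range v y (huv.disjoint.notMem_of_mem_left hj)]
  · have := Fintype.card_subtype_compl fun i => φ i ∈ L
    have := Fintype.card_subtype_le fun i => φ i ∈ L
    rcases le_or_gt (k₁ + 1) (Fintype.card {i // φ i ∈ L}) with h | h
    · refine Or.inl (Ideal.mem_sup_left ?_)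
      exact det_jacobian_mem_map_rename (φ := fun i : {i // φ i ∈ L} => φ i)
        (c := fun j => c (e₁ j)) (fun i => i.2)
        (hc.comp (Subtype.val_injective.comp e₁.injective)) (fun j => (e₁ j).2) h
    · refine Or.inr (Ideal.mem_sup_right ?_)
      exact det_jacobian_mem_map_rename (φ := fun i : {i // φ i ∉ L} => φ i)
        (c := fun j => c (e₂ j)) (fun i => (hφ i).resolve_left i.2)
        (hc.comp (Subtype.val_injective.comp e₂.injective))
        (fun j => huv.compl_eq ▸ (e₂ j).2) (by omega)

theorem jacExt_map_sup_map_le (huv : IsCompl (Set.range u) (Set.range v)) (B : Ideal (Amod a))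
    (C : Ideal (Amod b)) (k₁ k₂ : ℕ) :
    jacExt (k₁ + k₂ + 1) (B.map (rename u) ⊔ C.map (rename v)) ≤
      (jacExt (k₁ + 1) B).map (rename u) ⊔ (jacExt (k₂ + 1) C).map (rename v) := by
  have hle : B.map (rename u) ⊔ C.map (rename v) ≤
      (jacExt (k₁ + 1) B).map (rename u) ⊔ (jacExt (k₂ + 1) C).map (rename v) :=
    sup_le_sup (Ideal.map_mono (le_jacExt _ _)) (Ideal.map_mono (le_jacExt _ _))
  rw [jacExt]
  split_ifs
  · exact hle
  refine sup_le hle (Ideal.span_le.2 ?_)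
  rintro _ ⟨φ, hφ, j, hj, rfl⟩
  rw [Ideal.map, Ideal.map, ← Ideal.span_union] at hφ hle
  exact det_jacobian_mem_of_mem_span (Ideal.span_le.1 hle) j
    (fun ψ hψ => det_jacobian_mem_map_sup_map huv hψ hj.injective (by simp)) hφ

theorem det_jacobian_sumElim_rename (huv : Disjoint (Set.range u) (Set.range v)) {ι κ : Type*}
    [Fintype ι] [DecidableEq ι] [Fintype κ] [DecidableEq κ] (φ : ι → Amod a) (ψ : κ → Amod b)
    (j : ι → Fin a) (c : κ → Fin b) :
    (jacobian (Sum.elim (rename u ∘ φ) (rename v ∘ ψ)) (Sum.elim (u ∘ j) (v ∘ c))).det =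
      rename u (jacobian φ j).det * rename v (jacobian ψ c).det := by
  have hblocks : jacobian (Sum.elim (rename u ∘ φ) (rename v ∘ ψ)) (Sum.elim (u ∘ j) (v ∘ c)) =
      Matrix.fromBlocks ((jacobian φ j).map (rename u)) 0 0 ((jacobian ψ c).map (rename v)) := by
    refine Matrix.ext fun i l => ?_
    rcases i with i | i <;> rcases l with l | l <;> simp only [jacobian, pd_eq_pderiv,
      Matrix.of_apply, Sum.elim_inl, Sum.elim_inr, Function.comp_apply, Matrix.fromBlocks_apply₁₁,
      Matrix.fromBlocks_apply₁₂, Matrix.fromBlocks_apply₂₁, Matrix.fromBlocks_apply₂₂,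
      Matrix.map_apply, Matrix.zero_apply, pderiv_rename]
    · exact pderiv_rename_of_notMem_range u _ (huv.notMem_of_mem_right ⟨c l, rfl⟩)
    · exact pderiv_rename_of_notMem_range v _ (huv.notMem_of_mem_left ⟨j l, rfl⟩)
  rw [hblocks, Matrix.det_fromBlocks_zero₂₁, AlgHom.map_det, AlgHom.map_det]
  rfl

theorem map_jacExt_le_jacExt (huv : Disjoint (Set.range u) (Set.range v)) {B : Ideal (Amod a)}
    {C : Ideal (Amod b)} {K : Ideal (Amod m)} (hBK : B.map (rename u) ≤ K)
    (hCK : C.map (rename v) ≤ K) (k : ℕ) :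
    (jacExt (k + 1) B).map (rename u) ≤ jacExt (k + rankIdeal C + 1) K := by
  have hB : B ≤ (jacExt (k + rankIdeal C + 1) K).comap (rename u) :=
    Ideal.map_le_iff_le_comap.1 (hBK.trans (le_jacExt _ _))
  rw [Ideal.map_le_iff_le_comap, jacExt]
  split_ifs
  · exact hB
  refine sup_le hB (Ideal.span_le.2 ?_)
  rintro _ ⟨φ, hφ, j, hj, rfl⟩
  obtain ⟨ψ, hψ, c, hc, hunit⟩ := exists_isUnit_det_jacobian C
  have hmem := det_jacobian_mem_jacExt (B := K) (k := k + rankIdeal C + 1)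
    (φ := Sum.elim (rename u ∘ φ) (rename v ∘ ψ))
    (fun i => i.rec (fun i => hBK (Ideal.mem_map_of_mem _ (hφ i)))
      fun i => hCK (Ideal.mem_map_of_mem _ (hψ i)))
    ((u.injective.comp hj.injective).sumElim (v.injective.comp hc)
      fun i l => huv.ne_of_mem ⟨_, rfl⟩ ⟨_, rfl⟩)
    (by simp)
  rw [det_jacobian_sumElim_rename huv, Ideal.mul_unit_mem_iff_mem _ (hunit.map _)] at hmem
  exact hmem

theorem jacExt_map_sup_map (huv : IsCompl (Set.range u) (Set.range v)) (B : Ideal (Amod a))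
    (C : Ideal (Amod b)) :
    jacExt (rankIdeal B + rankIdeal C + 1) (B.map (rename u) ⊔ C.map (rename v)) =
      (jacExt (rankIdeal B + 1) B).map (rename u) ⊔
        (jacExt (rankIdeal C + 1) C).map (rename v) := by
  refine le_antisymm (jacExt_map_sup_map_le huv B C _ _) (sup_le ?_ ?_)
  · exact map_jacExt_le_jacExt huv.disjoint le_sup_left le_sup_right _
  · rw [add_comm (rankIdeal B)]
    exact map_jacExt_le_jacExt huv.disjoint.symm le_sup_right le_sup_left _

end SplitVariables

theorem prodIdeal_eq_map_sup_map {m₁ m₂ : ℕ} (J₁ : Ideal (Amod m₁)) (J₂ : Ideal (Amod m₂)) :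
    prodIdeal J₁ J₂ = J₁.map (rename (Fin.castAddEmb m₂)) ⊔ J₂.map (rename (Fin.natAddEmb m₁)) := by
  rw [prodIdeal, Ideal.span_union, embL_eq_rename, embR_eq_rename]
  rfl

theorem jacExtUpper_prodIdeal {m₁ m₂ : ℕ} (B₁ : Ideal (Amod m₁)) (B₂ : Ideal (Amod m₂)) :
    jacExtUpper (corankIdeal B₁ + corankIdeal B₂) (prodIdeal B₁ B₂) =
      prodIdeal (jacExtUpper (corankIdeal B₁) B₁) (jacExtUpper (corankIdeal B₂) B₂) := by
  have h₁ := rankIdeal_le B₁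
  have h₂ := rankIdeal_le B₂
  simp only [jacExtUpper, corankIdeal, prodIdeal_eq_map_sup_map]
  rw [show m₁ + m₂ - (m₁ - rankIdeal B₁ + (m₂ - rankIdeal B₂)) + 1 =
      rankIdeal B₁ + rankIdeal B₂ + 1 by omega,
    Nat.sub_sub_self h₁, Nat.sub_sub_self h₂]
  exact jacExt_map_sup_map (Fin.isCompl_range_castAddEmb_natAddEmb m₁ m₂) B₁ B₂

theorem iterExt_prodIdeal_general (m₁ m₂ : ℕ) (J₁ : Ideal (Amod m₁)) (J₂ : Ideal (Amod m₂)) :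
    ∀ p : ℕ, iterExt (prodIdeal J₁ J₂) (fun q => TB J₁ q + TB J₂ q) p =
      prodIdeal (TBiter J₁ p) (TBiter J₂ p) := by
  intro p
  induction p with
  | zero => rfl
  | succ p ih =>
    rw [iterExt, ih]
    exact jacExtUpper_prodIdeal _ _

/-- **Iterated critical extensions of a product ideal split.** Let `J₁ ⊆ 𝒜 m₁`, `J₂ ⊆ 𝒜 m₂`
be proper ideals with Thom–Boardman symbols `s^{(1)}`, `s^{(2)}`, and let
`s_q = s_q^{(1)} + s_q^{(2)}`. Then for every `p`,
`Δ^{s_p} ⋯ Δ^{s_1}(J₁ ⊞ J₂) = (Δ^{s_p^{(1)}} ⋯ Δ^{s_1^{(1)}} J₁) ⊞ (Δ^{s_p^{(2)}} ⋯ Δ^{s_1^{(2)}} J₂)`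
in `𝒜 (m₁+m₂)`. -/
theorem iterExt_prodIdeal (m₁ m₂ : ℕ) (J₁ : Ideal (Amod m₁)) (J₂ : Ideal (Amod m₂))
    (h₁ : J₁ ≠ ⊤) (h₂ : J₂ ≠ ⊤) :
    ∀ p : ℕ, iterExt (prodIdeal J₁ J₂) (fun q => TB J₁ q + TB J₂ q) p =
      prodIdeal (TBiter J₁ p) (TBiter J₂ p) :=
  iterExt_prodIdeal_general m₁ m₂ J₁ J₂
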